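/- arXiv:1308.3827 — 4 statements merged into one kernel-verified Lean document; each statement's English description precedes it below -/
import Mathlib

section
/- Let T, B, N be positive integers with N ≤ B ≤ T and N ≤ T. Define the rational number R = T / (T + B + B·N/(T - N + 1)). Then 0 < R < 1 and (R/(1-R))·B + N > T. -/
/-- Achievability claim of Theorem 2 (MiDAS codes), with `T_eff = T`. -/
theorem stmt_1 (T B N : ℕ) (hT : 0 < T) (hB : 0 < B) (hN : 0 < N)
    (hNB : N ≤ B) (hBT : B ≤ T) (hNT : N ≤ T) (R : ℚ)
    (hR : R = (T : ℚ) / ((T : ℚ) + B + B * N / ((T : ℚ) - N + 1))) :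
    0 < R ∧ R < 1 ∧ (R / (1 - R)) * B + N > (T : ℚ) := by
  have hTq : (0:ℚ) < T := by exact_mod_cast hT
  have hBq : (0:ℚ) < B := by exact_mod_cast hB
  have hNq : (0:ℚ) < N := by exact_mod_cast hN
  have hNTq : (N:ℚ) ≤ T := by exact_mod_cast hNT
  have hd : (0:ℚ) < (T:ℚ) - N + 1 := by linarith
  have hfrac : (0:ℚ) < B * N / ((T:ℚ) - N + 1) := by positivity
  have hden : (T:ℚ) < (T:ℚ) + B + B * N / ((T:ℚ) - N + 1) := by linarith
  have hdenpos : (0:ℚ) < (T:ℚ) + B + B * N / ((T:ℚ) - N + 1) := by linarith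
  have hR0 : 0 < R := by rw [hR]; exact div_pos hTq hdenpos
  have hR1 : R < 1 := by rw [hR]; exact (div_lt_one hdenpos).2 hden
  refine ⟨hR0, hR1, ?_⟩
  have hkey : R / (1 - R) = T * ((T:ℚ) - N + 1) / (B * (T + 1)) := by
    rw [hR]
    have h1 : ((T:ℚ) - N + 1) ≠ 0 := ne_of_gt hd
    have h2 : ((T:ℚ) + B + B * N / ((T:ℚ) - N + 1)) ≠ 0 := ne_of_gt hdenpos
    have h3 : ((T:ℚ) + B + B * N / ((T:ℚ) - N + 1)) - T ≠ 0 := by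
      have : (0:ℚ) < ((T:ℚ) + B + B * N / ((T:ℚ) - N + 1)) - T := by linarith
      exact ne_of_gt this
    have h1R : (1:ℚ) - (T:ℚ) / ((T:ℚ) + B + B * N / ((T:ℚ) - N + 1)) =
        (((T:ℚ) + B + B * N / ((T:ℚ) - N + 1)) - T) / ((T:ℚ) + B + B * N / ((T:ℚ) - N + 1)) := by
      field_simp
    have hD2 : ((T:ℚ) + B + B * N / ((T:ℚ) - N + 1)) - T = B * ((T:ℚ) + 1) / ((T:ℚ) - N + 1) := by
      field_simp
      ring
    rw [h1R, div_div_div_cancel_right₀ h2, hD2, div_div_eq_mul_div]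
  rw [hkey]
  have h4 : (T:ℚ) - N < T * ((T:ℚ) - N + 1) / (B * (T + 1)) * B := by
    rw [div_mul_eq_mul_div, lt_div_iff₀ (by positivity)]
    nlinarith
  linarith
end

section
/- Let T, B, N be positive integers with 1 ≤ N ≤ B ≤ T, and set p = T + B - N + 1. Define the periodic erasure set E = { t ∈ ℕ : t mod p < B }. Then for every i ∈ E with s = i mod p (so 0 ≤ s ≤ B-1), the number of elements of E in the window [i, i+T] equals max(B - s, N). -/
/-- Combinatorial core of the converse of Theorem 1 (case `W ≥ T+1`):
in the periodic erasure pattern with period `p = T+B-N+1` erasing the first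
`B` positions of each period, every decoding window `[i, i+T]` of an erased
position `i` (with offset `s = i mod p`) contains exactly `max (B - s) N`
erased positions. -/
theorem stmt_3 (T B N : ℕ) (hT : 0 < T) (hB : 0 < B) (hN : 0 < N)
    (hNB : N ≤ B) (hBT : B ≤ T) (p : ℕ) (hp : p = T + B - N + 1)
    (i : ℕ) (hi : i % p < B) (s : ℕ) (hs : s = i % p) :
    ((Finset.Icc i (i + T)).filter (fun t => t % p < B)).card =
      max (B - s) N := by
  have hps : s < p := by omega
  have key : ∀ t, i ≤ t → t ≤ i + T →
      (t % p < B ↔ (t < i + (B - s) ∨ i + (p - s) ≤ t)) := by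
    intro t h1 h2
    have hmod : (s + (t - i)) % p = t % p := by
      rw [hs, Nat.mod_add_mod]; congr 1; omega
    by_cases hc : t < i + (p - s)
    · have hlt : (s + (t - i)) % p = s + (t - i) := Nat.mod_eq_of_lt (by omega)
      omega
    · have h2p : (s + (t - i)) % p = s + (t - i) - p := by
        rw [Nat.mod_eq_sub_mod (by omega)]
        exact Nat.mod_eq_of_lt (by omega)
      omega
  have hset : (Finset.Icc i (i + T)).filter (fun t => t % p < B) =
      Finset.Ico i (i + (B - s)) ∪ Finset.Icc (i + (p - s)) (i + T) := by
    ext t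
    simp only [Finset.mem_filter, Finset.mem_Icc, Finset.mem_Ico, Finset.mem_union]
    constructor
    · rintro ⟨⟨h1, h2⟩, h3⟩
      rcases (key t h1 h2).1 h3 with h | h
      · exact Or.inl ⟨h1, h⟩
      · exact Or.inr ⟨h, h2⟩
    · rintro (⟨h1, h2⟩ | ⟨h1, h2⟩)
      · have h2' : t ≤ i + T := by omega
        exact ⟨⟨h1, h2'⟩, (key t h1 h2').2 (Or.inl h2)⟩
      · have h1' : i ≤ t := by omega
        exact ⟨⟨h1', h2⟩, (key t h1' h2).2 (Or.inr h1)⟩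
  have hdisj : Disjoint (Finset.Ico i (i + (B - s)))
      (Finset.Icc (i + (p - s)) (i + T)) := by
    apply Finset.disjoint_left.2
    intro t ht1 ht2
    simp only [Finset.mem_Ico] at ht1
    simp only [Finset.mem_Icc] at ht2
    omega
  rw [hset, Finset.card_union_of_disjoint hdisj, Nat.card_Ico, Nat.card_Icc]
  omega
end

section
/- Let W, B, N be positive integers with 1 ≤ N ≤ B and B + 1 ≤ W, and set p = W + B - N. Define E = { t ∈ ℕ : t mod p < B }. Then for every i ∈ ℕ, the number of elements of E in any window of length W, [i, i+W-1], is at most B, and if this window intersects the erasure bursts of two consecutive periods then it contains exactly N elements of E. -/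
lemma cnt_formula (p B : ℕ) (hp : 0 < p) (hB : B ≤ p) :
    ∀ n, ((Finset.range n).filter (fun t => t % p < B)).card
      = n / p * B + min (n % p) B := by
  intro n
  induction n with
  | zero => simp
  | succ n ih =>
    rw [Finset.range_add_one, Finset.filter_insert]
    have hdm := Nat.div_add_mod n p
    have hmod : n % p < p := Nat.mod_lt _ hp
    by_cases h : n % p + 1 < p
    · have h2 : (n+1) / p = n / p ∧ (n+1) % p = n % p + 1 :=
        (Nat.div_mod_unique hp).2 ⟨by omega, h⟩
      by_cases hb : n % p < B
      · rw [if_pos hb, Finset.card_insert_of_notMem (by simp), ih, h2.1, h2.2]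
        omega
      · rw [if_neg hb, ih, h2.1, h2.2]
        omega
    · have hpe : n % p + 1 = p := by omega
      have h2 : (n+1) / p = n / p + 1 ∧ (n+1) % p = 0 :=
        (Nat.div_mod_unique hp).2 ⟨by rw [Nat.mul_add, Nat.mul_one]; omega, hp⟩
      have hmul : (n / p + 1) * B = n / p * B + B := by ring
      by_cases hb : n % p < B
      · rw [if_pos hb, Finset.card_insert_of_notMem (by simp), ih, h2.1, h2.2]
        omega
      · rw [if_neg hb, ih, h2.1, h2.2]
        omega

/-- Periodic erasure pattern used in the converse of Theorem 1 for `W < T+1`: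
with period `p = W+B-N` and the first `B` positions of each period erased,
any window of length `W` contains at most `B` erased positions, and exactly
`N` erased positions if it meets the bursts of two consecutive periods. -/
theorem stmt_4 (W B N : ℕ) (hN : 1 ≤ N) (hNB : N ≤ B) (hBW : B + 1 ≤ W)
    (p : ℕ) (hp : p = W + B - N) (i : ℕ) :
    ((Finset.Icc i (i + W - 1)).filter (fun t => t % p < B)).card ≤ B ∧
      ((∃ t₁ ∈ (Finset.Icc i (i + W - 1)).filter (fun t => t % p < B),
          ∃ t₂ ∈ (Finset.Icc i (i + W - 1)).filter (fun t => t % p < B),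
            t₁ / p ≠ t₂ / p) →
        ((Finset.Icc i (i + W - 1)).filter (fun t => t % p < B)).card = N) := by
  have hp0 : 0 < p := by omega
  have hWp : W ≤ p := by omega
  have hBp : B < p := by omega
  have hIcc : Finset.Icc i (i + W - 1) = Finset.Ico i (i + W) := by
    ext t
    simp only [Finset.mem_Icc, Finset.mem_Ico]
    omega
  rw [hIcc]
  have hsplit : ((Finset.Ico i (i+W)).filter (fun t => t % p < B)).card
      = (i+W) / p * B + min ((i+W) % p) B - (i / p * B + min (i % p) B) := by
    have hu : Finset.range i ∪ Finset.Ico i (i+W) = Finset.range (i+W) := by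
      simp only [Finset.range_eq_Ico]
      exact Finset.Ico_union_Ico_eq_Ico (Nat.zero_le _) (by omega)
    have hd : Disjoint (Finset.range i) (Finset.Ico i (i+W)) := by
      rw [Finset.range_eq_Ico]
      exact Finset.Ico_disjoint_Ico_consecutive 0 i (i+W)
    have := Finset.card_union_of_disjoint
      (Finset.disjoint_filter_filter hd (p := fun t => t % p < B) (q := fun t => t % p < B))
    rw [← Finset.filter_union, hu] at this
    rw [cnt_formula p B hp0 (le_of_lt hBp), cnt_formula p B hp0 (le_of_lt hBp)] at this
    omega
  set q := i / p with hq
  have hiq : i % p + p * q = i := Nat.mod_add_div i p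
  have hr : i % p < p := Nat.mod_lt _ hp0
  have e1 : (q + 1) * p = p * q + p := by ring
  have e2 : (q + 2) * p = p * q + p + p := by ring
  by_cases hcase : i % p + W < p
  · -- window within one period
    have h2 : (i+W) / p = q ∧ (i+W) % p = i % p + W :=
      (Nat.div_mod_unique hp0).2 ⟨by omega, hcase⟩
    constructor
    · rw [hsplit, h2.1, h2.2]; omega
    · rintro ⟨t₁, h₁, t₂, h₂, hne⟩
      exfalso
      apply hne
      simp only [Finset.mem_filter, Finset.mem_Ico] at h₁ h₂
      have key : ∀ t, i ≤ t → t < i + W → t / p = q := by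
        intro t ht1 ht2
        have hlo : q ≤ t / p := hq ▸ Nat.div_le_div_right ht1
        have hhi : t / p < q + 1 := (Nat.div_lt_iff_lt_mul hp0).2 (by omega)
        omega
      rw [key t₁ h₁.1.1 h₁.1.2, key t₂ h₂.1.1 h₂.1.2]
  · -- window spans two periods
    have h2 : (i+W) / p = q + 1 ∧ (i+W) % p = i % p + W - p :=
      (Nat.div_mod_unique hp0).2 ⟨by
        have : p * (q + 1) = p * q + p := by ring
        omega, by omega⟩
    have hmul : (q + 1) * B = q * B + B := by ring
    by_cases hrB : i % p < B
    · have hcard : ((Finset.Ico i (i+W)).filter (fun t => t % p < B)).card = N := by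
        rw [hsplit, h2.1, h2.2]
        omega
      exact ⟨by omega, fun _ => hcard⟩
    · constructor
      · rw [hsplit, h2.1, h2.2]; omega
      · rintro ⟨t₁, h₁, t₂, h₂, hne⟩
        exfalso
        apply hne
        simp only [Finset.mem_filter, Finset.mem_Ico] at h₁ h₂
        have key : ∀ t, i ≤ t → t < i + W → t % p < B → t / p = q + 1 := by
          intro t ht1 ht2 ht3
          have hlo : q ≤ t / p := hq ▸ Nat.div_le_div_right ht1
          have hhi : t / p < q + 2 := (Nat.div_lt_iff_lt_mul hp0).2 (by omega)
          have hdm := Nat.mod_add_div t p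
          -- rule out t / p = q
          by_contra hne'
          have htq : t / p = q := by omega
          rw [htq] at hdm
          omega
        rw [key t₁ h₁.1.1 h₁.1.2 h₁.2, key t₂ h₂.1.1 h₂.1.2 h₂.2]
end

section
/- Let M, T, b be positive integers with T ≥ b, and B' an integer with 0 < B' ≤ M-1 and B' > bM/(T+b); set B = bM + B', n = T + b + 1, k^u = B, k^v = M(T+b+1) - 2B. Then k^u, k^v > 0 when B < M(T+b+1)/2, and b·(k^u + k^v) + B'·n - k^u = T·k^u. -/
/-- Counting identity of Lemma 3 in the regime `B' > bM/(T+b)`. -/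
theorem stmt_12 (M T b B' : ℤ) (hM : 0 < M) (hT : 0 < T) (hb : 0 < b)
    (hTb : b ≤ T) (hB'0 : 0 < B') (hB'1 : B' ≤ M - 1)
    (hB' : (B' : ℝ) > (b : ℝ) * M / ((T : ℝ) + b))
    (B n ku kv : ℤ) (hB : B = b * M + B') (hn : n = T + b + 1)
    (hku : ku = B) (hkv : kv = M * (T + b + 1) - 2 * B) :
    ((B : ℝ) < (M : ℝ) * ((T : ℝ) + b + 1) / 2 → 0 < ku ∧ 0 < kv) ∧
      b * (ku + kv) + B' * n - ku = T * ku := by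
  constructor
  · intro h
    constructor
    · nlinarith
    · have h2 : (2 * B : ℝ) < (M : ℝ) * ((T : ℝ) + b + 1) := by linarith
      have h3 : (2 * B : ℤ) < M * (T + b + 1) := by exact_mod_cast h2
      omega
  · subst hB hn hku hkv; ring
end
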